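/- Fix an index α. Let λ^1,…,λ^n and μ^1,…,μ^n be smooth on Ω with λ^i ≠ λ^j pointwise for i ≠ j, satisfying ∂_j μ^i/(μ^j − μ^i) = ∂_j λ^i/(λ^j − λ^i) for all i ≠ j, with μ^α, ∂_α μ^α and μ^α − μ^i (i ≠ α) nonvanishing. Define the adjoint-Lévy-transformed velocities Λ^α = (λ^α ∂_α μ^α − μ^α ∂_α λ^α)/∂_α μ^α and Λ^i = (λ^i μ^α − λ^α μ^i)/(μ^α − μ^i) for i ≠ α, assumed pairwise distinct pointwise, and set h = 1/μ^α, g = λ^α/μ^α. Then: (i) (h, g) is a conservation law of the transformed system, i.e. ∂_i g = Λ^i ∂_i h for all i; and (ii) the Lévy transformation L_α generated by (h, g) returns the original velocities: g/h = λ^α and, for i ≠ α, (Λ^i ∂_α h − A_{iα} g)/(∂_α h − A_{iα} h) = λ^i, where A_{iα} = ∂_α Λ^i/(Λ^α − Λ^i) (assuming ∂_α h − A_{iα} h is nonvanishing). -/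

import Mathlib

/-!
With `h = 1/μ^α` and `g = λ^α/μ^α`, the quotient rule turns `∂_i g = c ∂_i h` into
`μ^α ∂_i λ^α = (λ^α - c) ∂_i μ^α`; for `c = Λ^i` this is trivial when `i = α` and is the
commuting condition for the pair `(α, i)` otherwise.

For the inversion put `X = ∂_α μ^α (λ^α - λ^i) - ∂_α λ^α (μ^α - μ^i)`. The commuting condition
for `(i, α)` gives `∂_α Λ^i = μ^i X/(μ^α - μ^i)^2`, while `Λ^α - Λ^i = μ^α X/(∂_α μ^α (μ^α - μ^i))`,
so `X ≠ 0` and `A_{iα} = μ^i ∂_α μ^α/(μ^α (μ^α - μ^i))`. Then the denominator of the Lévy formula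
is `-∂_α μ^α/(μ^α (μ^α - μ^i))`, its numerator is `λ^i` times that, and the quotient is `λ^i`.
-/

/-- Partial derivative with respect to the `i`-th coordinate. -/
noncomputable def pd {n : ℕ} {F : Type*} [NormedAddCommGroup F] [NormedSpace ℝ F]
    (i : Fin n) (w : (Fin n → ℝ) → F) : (Fin n → ℝ) → F :=
  fun p => fderiv ℝ w p (Pi.single i 1)

section PartialDerivative

variable {n : ℕ} {f u : (Fin n → ℝ) → ℝ} {p : Fin n → ℝ} (i : Fin n)

lemma pd_sub (hf : DifferentiableAt ℝ f p) (hu : DifferentiableAt ℝ u p) :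
    pd i (fun q => f q - u q) p = pd i f p - pd i u p := by
  simp [pd, fderiv_fun_sub hf hu]

lemma pd_mul (hf : DifferentiableAt ℝ f p) (hu : DifferentiableAt ℝ u p) :
    pd i (fun q => f q * u q) p = pd i f p * u p + f p * pd i u p := by
  simp [pd, fderiv_fun_mul hf hu]
  ring

lemma pd_inv (hu : DifferentiableAt ℝ u p) (hu0 : u p ≠ 0) :
    pd i (fun q => (u q)⁻¹) p = -pd i u p / u p ^ 2 := by
  have h := ((hasFDerivAt_inv' (𝕜 := ℝ) hu0).comp p hu.hasFDerivAt).fderiv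
  simp only [pd]
  rw [show (fun q => (u q)⁻¹) = Inv.inv ∘ u from rfl, h]
  simp only [ContinuousLinearMap.comp_apply, neg_apply,
    ContinuousLinearMap.mulLeftRight_apply]
  field_simp

lemma pd_div (hf : DifferentiableAt ℝ f p) (hu : DifferentiableAt ℝ u p) (hu0 : u p ≠ 0) :
    pd i (fun q => f q / u q) p = (pd i f p * u p - f p * pd i u p) / u p ^ 2 := by
  simp only [div_eq_mul_inv]
  rw [pd_mul (u := fun q => (u q)⁻¹) i hf (hu.inv hu0), pd_inv i hu hu0]
  field_simp
  ring

lemma pd_div_eq_mul_pd_inv (hf : DifferentiableAt ℝ f p) (hu : DifferentiableAt ℝ u p)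
    (hu0 : u p ≠ 0) {c : ℝ} (hc : u p * pd i f p = (f p - c) * pd i u p) :
    pd i (fun q => f q / u q) p = c * pd i (fun q => (u q)⁻¹) p := by
  rw [pd_div i hf hu hu0, pd_inv i hu hu0]
  field_simp
  linear_combination hc

lemma pd_adjoint_levy_velocity {l m a b : (Fin n → ℝ) → ℝ} (hl : DifferentiableAt ℝ l p)
    (hm : DifferentiableAt ℝ m p) (ha : DifferentiableAt ℝ a p) (hb : DifferentiableAt ℝ b p)
    (hab : a p - b p ≠ 0) (hlm : l p - m p ≠ 0)
    (hcomm : pd i b p / (a p - b p) = pd i m p / (l p - m p)) :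
    pd i (fun q => (m q * a q - l q * b q) / (a q - b q)) p =
      b p * (pd i a p * (l p - m p) - pd i l p * (a p - b p)) / (a p - b p) ^ 2 := by
  rw [div_eq_div_iff hab hlm] at hcomm
  rw [pd_div i ((hm.fun_mul ha).fun_sub (hl.fun_mul hb)) (ha.fun_sub hb) hab,
    pd_sub i (hm.fun_mul ha) (hl.fun_mul hb), pd_sub i ha hb, pd_mul i hm ha, pd_mul i hl hb]
  linear_combination (-a p / (a p - b p) ^ 2) * hcomm

end PartialDerivative

lemma adjoint_levy_conservation_rel_self {a a' l l' : ℝ} (ha' : a' ≠ 0) :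
    a * l' = (l - (l * a' - a * l') / a') * a' := by
  field_simp
  ring

lemma adjoint_levy_conservation_rel {a a' b l l' m : ℝ} (hab : a - b ≠ 0) (hlm : m - l ≠ 0)
    (hcomm : a' / (b - a) = l' / (m - l)) :
    a * l' = (l - (m * a - l * b) / (a - b)) * a' := by
  rw [div_eq_div_iff (by rwa [← neg_sub, neg_ne_zero]) hlm] at hcomm
  field_simp
  linear_combination a * hcomm

lemma levy_coefficient_eq {a a' b l l' m : ℝ} (ha : a ≠ 0) (ha' : a' ≠ 0) (hab : a - b ≠ 0)
    (hne : (l * a' - a * l') / a' ≠ (m * a - l * b) / (a - b)) :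
    b * (a' * (l - m) - l' * (a - b)) / (a - b) ^ 2 /
        ((l * a' - a * l') / a' - (m * a - l * b) / (a - b)) =
      b * a' / (a * (a - b)) := by
  have hdiff : (l * a' - a * l') / a' - (m * a - l * b) / (a - b) =
      a * (a' * (l - m) - l' * (a - b)) / (a' * (a - b)) := by
    field_simp
    ring
  have hX : a' * (l - m) - l' * (a - b) ≠ 0 := by
    rintro hX
    exact hne (sub_eq_zero.mp (by rw [hdiff, hX, mul_zero, zero_div]))
  rw [hdiff]
  field_simp

lemma levy_velocity_eq {a a' b l m : ℝ} (ha : a ≠ 0) (ha' : a' ≠ 0) (hab : a - b ≠ 0) :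
    ((m * a - l * b) / (a - b) * (-a' / a ^ 2) - b * a' / (a * (a - b)) * (l / a)) /
        (-a' / a ^ 2 - b * a' / (a * (a - b)) * a⁻¹) = m := by
  have hden : -a' / a ^ 2 - b * a' / (a * (a - b)) * a⁻¹ = -a' / (a * (a - b)) := by
    field_simp
    ring
  rw [hden, div_eq_iff (by simp [ha, ha', hab])]
  field_simp
  ring

theorem stmt19_general {n : ℕ} (Ω : Set (Fin n → ℝ)) (hΩ : IsOpen Ω) (α : Fin n)
    (lam mu : Fin n → (Fin n → ℝ) → ℝ)
    (hlam : ∀ i, ContDiffOn ℝ (⊤ : ℕ∞) (lam i) Ω)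
    (hmusm : ∀ i, ContDiffOn ℝ (⊤ : ℕ∞) (mu i) Ω)
    (hdist : ∀ i j, i ≠ j → ∀ p ∈ Ω, lam i p ≠ lam j p)
    (hcomm : ∀ i j, i ≠ j → ∀ p ∈ Ω,
      pd j (mu i) p / (mu j p - mu i p) = pd j (lam i) p / (lam j p - lam i p))
    (hmuα0 : ∀ p ∈ Ω, mu α p ≠ 0)
    (hdmuα0 : ∀ p ∈ Ω, pd α (mu α) p ≠ 0)
    (hmudiff : ∀ i, i ≠ α → ∀ p ∈ Ω, mu α p - mu i p ≠ 0)
    (Lam : Fin n → (Fin n → ℝ) → ℝ)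
    (hLamα : ∀ p, Lam α p =
      (lam α p * pd α (mu α) p - mu α p * pd α (lam α) p) / pd α (mu α) p)
    (hLami : ∀ i, i ≠ α → ∀ p, Lam i p =
      (lam i p * mu α p - lam α p * mu i p) / (mu α p - mu i p))
    (hLamdist : ∀ i j, i ≠ j → ∀ p ∈ Ω, Lam i p ≠ Lam j p)
    (h g : (Fin n → ℝ) → ℝ)
    (hh : ∀ p, h p = 1 / mu α p)
    (hg : ∀ p, g p = lam α p / mu α p) :
    (∀ i, ∀ p ∈ Ω, pd i g p = Lam i p * pd i h p)
      ∧
    (∀ p ∈ Ω, g p / h p = lam α p)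
      ∧
    (∀ i, i ≠ α → ∀ p ∈ Ω,
        (Lam i p * pd α h p - (pd α (Lam i) p / (Lam α p - Lam i p)) * g p)
          / (pd α h p - (pd α (Lam i) p / (Lam α p - Lam i p)) * h p) = lam i p) := by
  have hdlam (i) (p) (hp : p ∈ Ω) : DifferentiableAt ℝ (lam i) p :=
    ((hlam i).contDiffAt (hΩ.mem_nhds hp)).differentiableAt (by simp)
  have hdmu (i) (p) (hp : p ∈ Ω) : DifferentiableAt ℝ (mu i) p :=
    ((hmusm i).contDiffAt (hΩ.mem_nhds hp)).differentiableAt (by simp)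
  obtain rfl : h = fun q => (mu α q)⁻¹ := funext fun q => by rw [hh, one_div]
  obtain rfl : g = fun q => lam α q / mu α q := funext hg
  refine ⟨fun i p hp => ?_, fun p hp => by field_simp [hmuα0 p hp], fun i hi p hp => ?_⟩
  · refine pd_div_eq_mul_pd_inv i (hdlam α p hp) (hdmu α p hp) (hmuα0 p hp) ?_
    obtain rfl | hi := eq_or_ne i α
    · rw [hLamα]
      exact adjoint_levy_conservation_rel_self (hdmuα0 p hp)
    · rw [hLami i hi]
      exact adjoint_levy_conservation_rel (hmudiff i hi p hp)
        (sub_ne_zero.mpr (hdist i α hi p hp)) (hcomm α i hi.symm p hp)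
  · have hdLam := pd_adjoint_levy_velocity α (hdlam α p hp) (hdlam i p hp) (hdmu α p hp)
      (hdmu i p hp) (hmudiff i hi p hp) (sub_ne_zero.mpr (hdist α i hi.symm p hp))
      (hcomm i α hi p hp)
    rw [← funext (hLami i hi)] at hdLam
    have hLamne := hLamdist α i hi.symm p hp
    rw [hLamα, hLami i hi] at hLamne
    rw [hdLam, hLamα, hLami i hi, levy_coefficient_eq (hmuα0 p hp) (hdmuα0 p hp)
      (hmudiff i hi p hp) hLamne, pd_inv α (hdmu α p hp) (hmuα0 p hp)]
    exact levy_velocity_eq (hmuα0 p hp) (hdmuα0 p hp) (hmudiff i hi p hp)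

/-- `(h, g) = (1/μ^α, λ^α/μ^α)` is a conservation law of the
adjoint-Lévy-transformed system (velocities `Λ`), and the Lévy transformation `L_α`
generated by `(h, g)` returns the original velocities `λ`; here
`A_{iα} = ∂_α Λ^i/(Λ^α − Λ^i)`. -/
theorem stmt19 {n : ℕ} (Ω : Set (Fin n → ℝ)) (hΩ : IsOpen Ω) (α : Fin n)
    (lam mu : Fin n → (Fin n → ℝ) → ℝ)
    (hlam : ∀ i, ContDiffOn ℝ (⊤ : ℕ∞) (lam i) Ω)
    (hmusm : ∀ i, ContDiffOn ℝ (⊤ : ℕ∞) (mu i) Ω)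
    (hdist : ∀ i j, i ≠ j → ∀ p ∈ Ω, lam i p ≠ lam j p)
    (hcomm : ∀ i j, i ≠ j → ∀ p ∈ Ω,
      pd j (mu i) p / (mu j p - mu i p) = pd j (lam i) p / (lam j p - lam i p))
    (hmuα0 : ∀ p ∈ Ω, mu α p ≠ 0)
    (hdmuα0 : ∀ p ∈ Ω, pd α (mu α) p ≠ 0)
    (hmudiff : ∀ i, i ≠ α → ∀ p ∈ Ω, mu α p - mu i p ≠ 0)
    (Lam : Fin n → (Fin n → ℝ) → ℝ)
    (hLamα : ∀ p, Lam α p =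
      (lam α p * pd α (mu α) p - mu α p * pd α (lam α) p) / pd α (mu α) p)
    (hLami : ∀ i, i ≠ α → ∀ p, Lam i p =
      (lam i p * mu α p - lam α p * mu i p) / (mu α p - mu i p))
    (hLamdist : ∀ i j, i ≠ j → ∀ p ∈ Ω, Lam i p ≠ Lam j p)
    (h g : (Fin n → ℝ) → ℝ)
    (hh : ∀ p, h p = 1 / mu α p)
    (hg : ∀ p, g p = lam α p / mu α p)
    (hden : ∀ i, i ≠ α → ∀ p ∈ Ω,
      pd α h p - (pd α (Lam i) p / (Lam α p - Lam i p)) * h p ≠ 0) :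
    (∀ i, ∀ p ∈ Ω, pd i g p = Lam i p * pd i h p)
      ∧
    (∀ p ∈ Ω, g p / h p = lam α p)
      ∧
    (∀ i, i ≠ α → ∀ p ∈ Ω,
        (Lam i p * pd α h p - (pd α (Lam i) p / (Lam α p - Lam i p)) * g p)
          / (pd α h p - (pd α (Lam i) p / (Lam α p - Lam i p)) * h p) = lam i p) :=
  stmt19_general Ω hΩ α lam mu hlam hmusm hdist hcomm hmuα0 hdmuα0 hmudiff Lam hLamα hLami hLamdist
    h g hh hg
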